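/- Let d ≥ 1 be an integer, V a finite nonempty subset of ℤ^d (with the Euclidean norm ‖·‖ on ℝ^d), and R : V × V → ℂ a unitary matrix satisfying the Lieb–Robinson promise |R(j,k)| ≤ min(1, exp((v·t − ‖j − k‖)/ξ)) for all j,k ∈ V, where v ≥ 0, t ≥ 0, ξ > 0. Let L > 0 and let S ⊆ V satisfy j − k ∈ (2L)·ℤ^d for all j,k ∈ S. Then there exist constants a' > 0 and L₀ > 0 depending only on d and ξ such that, if L ≥ L₀, then for every i ∈ S: Σ_{j ∈ V, ‖j − i‖ ≤ L} |R(i,j)| · ( Σ_{k ∈ S, k ≠ i} |R(j,k)| ) ≤ a' · L^{d/2} · exp((v·t − L)/ξ). -/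

import Mathlib

open scoped BigOperators

/-- Euclidean norm of a point of the integer lattice `ℤ^d`. -/
noncomputable def euclNormZ {d : ℕ} (x : Fin d → ℤ) : ℝ :=
  Real.sqrt (∑ a, ((x a : ℝ)) ^ 2)

/-!
Cauchy–Schwarz against the unit row `(R i ·)` bounds `∑_{‖j - i‖ ≤ L} |R i j|` by the square root of
the number of lattice points in a ball of radius `L`, which is at most `(3L)^d`. For each such `j`,
every other occupied site is `k = i + 2L x` with `x ∈ ℤ^d ∖ {0}`, so `‖j - k‖ ≥ 2L‖x‖ - L` and
`∑_k |R j k| ≤ e^{(vt - L)/ξ} ∑_{x ≠ 0} e^{-2(L/ξ)(‖x‖ - 1)}`. Once `L/ξ ≥ d`, the bounds `‖x‖ ≥ 1`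
and `d‖x‖ ≥ |x|₁` make this sum at most `e^{2d} (∑_{n ∈ ℤ} e^{-|n|})^d`.
-/

open Finset Real
open scoped Matrix

lemma Finset.sum_prod_apply_le_tsum_pow {ι α : Type*} [Fintype ι] [DecidableEq ι] [DecidableEq α]
    {g : α → ℝ} (hg0 : ∀ n, 0 ≤ g n) (hg : Summable g) (F : Finset (ι → α)) :
    ∑ x ∈ F, ∏ a, g (x a) ≤ (∑' n, g n) ^ Fintype.card ι := by
  set t : ι → Finset α := fun a => F.image (· a)
  have hF : F ⊆ Fintype.piFinset t := fun x hx =>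
    Fintype.mem_piFinset.mpr fun a => mem_image_of_mem (· a) hx
  calc ∑ x ∈ F, ∏ a, g (x a) ≤ ∑ x ∈ Fintype.piFinset t, ∏ a, g (x a) :=
        sum_le_sum_of_subset_of_nonneg hF fun x _ _ => prod_nonneg fun a _ => hg0 _
    _ = ∏ a, ∑ n ∈ t a, g n := (prod_univ_sum t fun _ => g).symm
    _ ≤ ∏ _a : ι, ∑' n, g n :=
        prod_le_prod (fun a _ => sum_nonneg fun n _ => hg0 n)
          fun a _ => hg.sum_le_tsum _ fun n _ => hg0 n
    _ = (∑' n, g n) ^ Fintype.card ι := by simp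

lemma summable_exp_neg_abs_int : Summable fun n : ℤ => exp (-|(n : ℝ)|) :=
  .of_nat_of_neg (by simpa using summable_exp_neg_nat) (by simpa using summable_exp_neg_nat)

section Unitary

variable {𝕜 n : Type*} [RCLike 𝕜] [Fintype n] [DecidableEq n]

lemma Matrix.sum_norm_sq_row_of_mem_unitaryGroup {U : Matrix n n 𝕜}
    (hU : U ∈ Matrix.unitaryGroup n 𝕜) (i : n) : ∑ j, ‖U i j‖ ^ 2 = 1 := by
  have hdiag : (U * Uᴴ) i i = 1 := by
    rw [← Matrix.star_eq_conjTranspose, Unitary.mul_star_self_of_mem hU, Matrix.one_apply_eq]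
  simp only [Matrix.mul_apply, Matrix.conjTranspose_apply, ← starRingEnd_apply,
    RCLike.mul_conj] at hdiag
  exact_mod_cast hdiag

lemma Matrix.sum_norm_row_le_sqrt_card_of_mem_unitaryGroup {U : Matrix n n 𝕜}
    (hU : U ∈ Matrix.unitaryGroup n 𝕜) (i : n) (T : Finset n) :
    ∑ j ∈ T, ‖U i j‖ ≤ √(#T : ℝ) := by
  have hrow : ∑ j ∈ T, ‖U i j‖ ^ 2 ≤ 1 := by
    rw [← sum_norm_sq_row_of_mem_unitaryGroup hU i]
    exact sum_le_sum_of_subset_of_nonneg (subset_univ T) fun j _ _ => sq_nonneg _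
  apply le_sqrt_of_sq_le
  calc (∑ j ∈ T, ‖U i j‖) ^ 2 ≤ #T * ∑ j ∈ T, ‖U i j‖ ^ 2 := sq_sum_le_card_mul_sum_sq
    _ ≤ #T := mul_le_of_le_one_right (by positivity) hrow

end Unitary

section Lattice

variable {d : ℕ}

def latticeToEuclidean (x : Fin d → ℤ) : EuclideanSpace ℝ (Fin d) :=
  WithLp.toLp 2 fun a => (x a : ℝ)

@[simp]
lemma latticeToEuclidean_apply (x : Fin d → ℤ) (a : Fin d) :
    latticeToEuclidean x a = x a := rfl

lemma latticeToEuclidean_sub (x y : Fin d → ℤ) :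
    latticeToEuclidean (x - y) = latticeToEuclidean x - latticeToEuclidean y := by
  ext a; simp

lemma euclNormZ_eq_norm (x : Fin d → ℤ) : euclNormZ x = ‖latticeToEuclidean x‖ := by
  simp [euclNormZ, EuclideanSpace.norm_eq]

lemma euclNormZ_sub_eq_dist (x y : Fin d → ℤ) :
    euclNormZ (x - y) = dist (latticeToEuclidean x) (latticeToEuclidean y) := by
  rw [euclNormZ_eq_norm, latticeToEuclidean_sub, dist_eq_norm]

lemma euclNormZ_sub_comm (x y : Fin d → ℤ) : euclNormZ (x - y) = euclNormZ (y - x) := by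
  rw [euclNormZ_sub_eq_dist, euclNormZ_sub_eq_dist, dist_comm]

lemma euclNormZ_sub_le (x y z : Fin d → ℤ) :
    euclNormZ (x - z) ≤ euclNormZ (x - y) + euclNormZ (y - z) := by
  simpa only [euclNormZ_sub_eq_dist] using dist_triangle _ _ _

lemma abs_apply_le_euclNormZ (x : Fin d → ℤ) (a : Fin d) : |(x a : ℝ)| ≤ euclNormZ x := by
  simpa [euclNormZ_eq_norm] using PiLp.norm_apply_le (latticeToEuclidean x) a

lemma sum_abs_le_mul_euclNormZ (x : Fin d → ℤ) : ∑ a, |(x a : ℝ)| ≤ d * euclNormZ x := by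
  simpa using sum_le_sum fun a (_ : a ∈ univ) => abs_apply_le_euclNormZ x a

lemma one_le_euclNormZ {x : Fin d → ℤ} (hx : x ≠ 0) : 1 ≤ euclNormZ x := by
  obtain ⟨a, ha⟩ := Function.ne_iff.mp hx
  calc (1 : ℝ) ≤ |(x a : ℝ)| := by exact_mod_cast Int.one_le_abs ha
    _ ≤ euclNormZ x := abs_apply_le_euclNormZ x a

lemma euclNormZ_eq_mul_of_forall_eq {w x : Fin d → ℤ} {c : ℝ} (hc : 0 ≤ c)
    (h : ∀ a, (w a : ℝ) = c * x a) : euclNormZ w = c * euclNormZ x := by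
  have : latticeToEuclidean w = c • latticeToEuclidean x := by ext a; simp [h]
  rw [euclNormZ_eq_norm, euclNormZ_eq_norm, this, norm_smul, Real.norm_of_nonneg hc]

lemma card_le_of_forall_euclNormZ_sub_le (s : Finset (Fin d → ℤ)) (c : Fin d → ℤ) {L : ℝ}
    (hs : ∀ x ∈ s, euclNormZ (x - c) ≤ L) : #s ≤ (2 * ⌈L⌉₊ + 1) ^ d := by
  set N : ℤ := (⌈L⌉₊ : ℤ)
  have hbox : s ⊆ Fintype.piFinset fun a => Icc (c a - N) (c a + N) := by
    intro x hx
    refine Fintype.mem_piFinset.mpr fun a => mem_Icc.mpr ?_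
    have hxa : |((x - c) a : ℝ)| ≤ N :=
      (abs_apply_le_euclNormZ _ a).trans ((hs x hx).trans (by simpa [N] using Nat.le_ceil L))
    have : |x a - c a| ≤ N := by exact_mod_cast hxa
    constructor <;> linarith [abs_le.mp this]
  calc #s ≤ #(Fintype.piFinset fun a => Icc (c a - N) (c a + N)) := card_le_card hbox
    _ = (2 * ⌈L⌉₊ + 1) ^ d := by
      have hIcc : ∀ a, #(Icc (c a - N) (c a + N)) = 2 * ⌈L⌉₊ + 1 := fun a => by
        rw [Int.card_Icc]; omega
      simp [hIcc]

lemma card_le_three_mul_pow {ι : Type*} {p : ι → Fin d → ℤ} (hp : p.Injective) (s : Finset ι)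
    (c : Fin d → ℤ) {L : ℝ} (hL : 3 ≤ L) (hs : ∀ x ∈ s, euclNormZ (p x - c) ≤ L) :
    (#s : ℝ) ≤ (3 * L) ^ d := by
  have hcard := card_le_of_forall_euclNormZ_sub_le (s.image p) c (by simpa using hs)
  rw [card_image_of_injective s hp] at hcard
  calc (#s : ℝ) ≤ ((2 * ⌈L⌉₊ + 1) ^ d : ℕ) := by exact_mod_cast hcard
    _ ≤ (3 * L) ^ d := by
      push_cast
      gcongr
      linarith [Nat.ceil_lt_add_one (by linarith : (0 : ℝ) ≤ L)]

noncomputable def latticeExpSumBound (d : ℕ) : ℝ :=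
  exp (2 * d) * (∑' n : ℤ, exp (-|(n : ℝ)|)) ^ d

lemma latticeExpSumBound_pos (d : ℕ) : 0 < latticeExpSumBound d :=
  mul_pos (exp_pos _) <| pow_pos (summable_exp_neg_abs_int.tsum_pos
    (fun _ => (exp_pos _).le) 0 (exp_pos _)) d

lemma sum_exp_neg_euclNormZ_le {c : ℝ} (hc : d ≤ c) (F : Finset (Fin d → ℤ)) (hF : 0 ∉ F) :
    ∑ x ∈ F, exp (-(2 * c * (euclNormZ x - 1))) ≤ latticeExpSumBound d := by
  have hterm : ∀ x ∈ F, exp (-(2 * c * (euclNormZ x - 1))) ≤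
      exp (2 * d) * ∏ a, exp (-|(x a : ℝ)|) := by
    intro x hx
    have h1 : 1 ≤ euclNormZ x := one_le_euclNormZ (ne_of_mem_of_not_mem hx hF)
    have hl1 := sum_abs_le_mul_euclNormZ x
    have hl1_nonneg : 0 ≤ ∑ a, |(x a : ℝ)| := sum_nonneg fun a _ => abs_nonneg _
    rw [← exp_sum, ← exp_add, sum_neg_distrib]
    gcongr
    nlinarith
  calc ∑ x ∈ F, exp (-(2 * c * (euclNormZ x - 1)))
      ≤ ∑ x ∈ F, exp (2 * d) * ∏ a, exp (-|(x a : ℝ)|) := sum_le_sum hterm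
    _ ≤ latticeExpSumBound d := by
      rw [← mul_sum, latticeExpSumBound]
      gcongr
      simpa using sum_prod_apply_le_tsum_pow (fun n => (exp_pos _).le) summable_exp_neg_abs_int F

lemma exp_sub_euclNormZ_le_of_eq_add {s ξ L : ℝ} (hξ : 0 < ξ) (hL : 0 ≤ L) {i j k x : Fin d → ℤ}
    (hj : euclNormZ (j - i) ≤ L) (hk : ∀ a, (k a : ℝ) = i a + 2 * L * x a) :
    exp ((s - euclNormZ (j - k)) / ξ) ≤
      exp ((s - L) / ξ) * exp (-(2 * (L / ξ) * (euclNormZ x - 1))) := by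
  have hki : euclNormZ (k - i) = 2 * L * euclNormZ x :=
    euclNormZ_eq_mul_of_forall_eq (by positivity) fun a => by
      simp only [Pi.sub_apply, Int.cast_sub, hk a]; ring
  have htri := euclNormZ_sub_le k j i
  rw [euclNormZ_sub_comm k j, hki] at htri
  have hexp : (s - L) / ξ + -(2 * (L / ξ) * (euclNormZ x - 1)) =
      (s - (2 * L * euclNormZ x - L)) / ξ := by
    field_simp; ring
  rw [← exp_add, hexp]
  gcongr
  linarith

lemma sum_exp_sub_sublattice_le {ι : Type*} {p : ι → Fin d → ℤ} (hp : p.Injective)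
    {s ξ L : ℝ} (hξ : 0 < ξ) (hL : d * ξ ≤ L) {i : ι} {j : Fin d → ℤ}
    (hj : euclNormZ (j - p i) ≤ L) (K : Finset ι) (hiK : i ∉ K)
    (hK : ∀ k ∈ K, ∃ x : Fin d → ℤ, ∀ a, (p k a : ℝ) - p i a = 2 * L * x a) :
    ∑ k ∈ K, exp ((s - euclNormZ (j - p k)) / ξ) ≤
      latticeExpSumBound d * exp ((s - L) / ξ) := by
  choose! φ hφ using hK
  have hφ_eq : ∀ k ∈ K, ∀ a, (p k a : ℝ) = p i a + 2 * L * φ k a := fun k hk a => by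
    linarith [hφ k hk a]
  have hp_eq : ∀ k ∈ K, ∀ k' ∈ K, φ k = φ k' → p k = p k' := fun k hk k' hk' h =>
    funext fun a => by exact_mod_cast (hφ_eq k hk a).trans (h ▸ hφ_eq k' hk' a).symm
  have hφ_ne : 0 ∉ K.image φ := by
    intro h0
    obtain ⟨k, hk, hk0⟩ := mem_image.mp h0
    have hki : p k = p i := funext fun a => by
      have := hφ_eq k hk a
      simp only [hk0, Pi.zero_apply, Int.cast_zero, mul_zero, add_zero] at this
      exact_mod_cast this
    exact hiK (hp hki ▸ hk)
  calc ∑ k ∈ K, exp ((s - euclNormZ (j - p k)) / ξ)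
      ≤ ∑ k ∈ K, exp ((s - L) / ξ) * exp (-(2 * (L / ξ) * (euclNormZ (φ k) - 1))) :=
        sum_le_sum fun k hk =>
          exp_sub_euclNormZ_le_of_eq_add hξ (le_trans (by positivity) hL) hj (hφ_eq k hk)
    _ = exp ((s - L) / ξ) * ∑ x ∈ K.image φ, exp (-(2 * (L / ξ) * (euclNormZ x - 1))) := by
        rw [sum_image fun k hk k' hk' h => hp (hp_eq k hk k' hk' h), mul_sum]
    _ ≤ exp ((s - L) / ξ) * latticeExpSumBound d := by
        gcongr
        exact sum_exp_neg_euclNormZ_le ((le_div_iff₀ hξ).mpr hL) _ hφ_ne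
    _ = _ := mul_comm _ _

end Lattice

theorem stmt7_general (d : ℕ) (ξ : ℝ) (hξ : 0 < ξ) :
    ∃ a' : ℝ, 0 < a' ∧ ∃ L₀ : ℝ, 0 < L₀ ∧
      ∀ (V : Finset (Fin d → ℤ)), V.Nonempty →
      ∀ R : Matrix ↥V ↥V ℂ, R ∈ Matrix.unitaryGroup ↥V ℂ →
      ∀ v t L : ℝ, 0 ≤ v → 0 ≤ t → 0 < L →
      (∀ j k : ↥V, ‖R j k‖ ≤
        min 1 (Real.exp ((v * t - euclNormZ ((j : Fin d → ℤ) - (k : Fin d → ℤ))) / ξ))) →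
      ∀ S : Finset ↥V,
      (∀ j ∈ S, ∀ k ∈ S, ∃ x : Fin d → ℤ, ∀ a : Fin d,
        (((j : Fin d → ℤ) a : ℝ) - ((k : Fin d → ℤ) a : ℝ)) = 2 * L * (x a : ℝ)) →
      L₀ ≤ L →
      ∀ i ∈ S,
        ∑ j ∈ Finset.univ.filter
            (fun j : ↥V => euclNormZ ((j : Fin d → ℤ) - (i : Fin d → ℤ)) ≤ L),
          ‖R i j‖ * ∑ k ∈ S.erase i, ‖R j k‖
        ≤ a' * L ^ ((d : ℝ) / 2) * Real.exp ((v * t - L) / ξ) := by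
  set C := latticeExpSumBound d
  have hC : 0 < C := latticeExpSumBound_pos d
  refine ⟨3 ^ ((d : ℝ) / 2) * C, by positivity, 3 + d * ξ, by positivity, ?_⟩
  intro V _ R hR v t L _ _ hL0 hR_le S hS hL i hi
  set T := univ.filter fun j : ↥V => euclNormZ ((j : Fin d → ℤ) - (i : Fin d → ℤ)) ≤ L
  have hinner : ∀ j ∈ T, ∑ k ∈ S.erase i, ‖R j k‖ ≤ C * exp ((v * t - L) / ξ) :=
    fun j hj =>
    (sum_le_sum fun k _ => (hR_le j k).trans (min_le_right _ _)).trans <|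
      sum_exp_sub_sublattice_le Subtype.val_injective hξ (by linarith) (mem_filter.mp hj).2 _
        (notMem_erase i S) fun k hk => hS k (mem_of_mem_erase hk) i hi
  have hcard : (#T : ℝ) ≤ (3 * L) ^ d :=
    card_le_three_mul_pow Subtype.val_injective T i
      (by linarith [mul_nonneg (Nat.cast_nonneg d) hξ.le]) fun j hj => (mem_filter.mp hj).2
  calc ∑ j ∈ T, ‖R i j‖ * ∑ k ∈ S.erase i, ‖R j k‖
      ≤ (∑ j ∈ T, ‖R i j‖) * (C * exp ((v * t - L) / ξ)) := by
        rw [sum_mul]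
        exact sum_le_sum fun j hj => mul_le_mul_of_nonneg_left (hinner j hj) (norm_nonneg _)
    _ ≤ √((3 * L) ^ d) * (C * exp ((v * t - L) / ξ)) := by
        gcongr
        exact (Matrix.sum_norm_row_le_sqrt_card_of_mem_unitaryGroup hR i T).trans
          (sqrt_le_sqrt hcard)
    _ = 3 ^ ((d : ℝ) / 2) * C * L ^ ((d : ℝ) / 2) * exp ((v * t - L) / ξ) := by
        rw [sqrt_eq_rpow, ← rpow_natCast, ← rpow_mul (by positivity),
          mul_rpow (by norm_num) hL0.le, mul_one_div]
        ring

/-- Eqs. (S26)–(S30): bound on the contribution of intermediate sites `j`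
within distance `L` of the initially occupied site `i`. -/
theorem stmt7 (d : ℕ) (hd : 1 ≤ d) (ξ : ℝ) (hξ : 0 < ξ) :
    ∃ a' : ℝ, 0 < a' ∧ ∃ L₀ : ℝ, 0 < L₀ ∧
      ∀ (V : Finset (Fin d → ℤ)), V.Nonempty →
      ∀ R : Matrix ↥V ↥V ℂ, R ∈ Matrix.unitaryGroup ↥V ℂ →
      ∀ v t L : ℝ, 0 ≤ v → 0 ≤ t → 0 < L →
      (∀ j k : ↥V, ‖R j k‖ ≤
        min 1 (Real.exp ((v * t - euclNormZ ((j : Fin d → ℤ) - (k : Fin d → ℤ))) / ξ))) →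
      ∀ S : Finset ↥V,
      (∀ j ∈ S, ∀ k ∈ S, ∃ x : Fin d → ℤ, ∀ a : Fin d,
        (((j : Fin d → ℤ) a : ℝ) - ((k : Fin d → ℤ) a : ℝ)) = 2 * L * (x a : ℝ)) →
      L₀ ≤ L →
      ∀ i ∈ S,
        ∑ j ∈ Finset.univ.filter
            (fun j : ↥V => euclNormZ ((j : Fin d → ℤ) - (i : Fin d → ℤ)) ≤ L),
          ‖R i j‖ * ∑ k ∈ S.erase i, ‖R j k‖
        ≤ a' * L ^ ((d : ℝ) / 2) * Real.exp ((v * t - L) / ξ) :=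
  stmt7_general d ξ hξ
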